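/- arXiv:0911.3969 — 3 statements merged into one kernel-verified Lean document; each statement's English description precedes it below -/
import Mathlib

section
/- Every oriented graph D satisfies ow(D) ≥ √(e(D))/2, where e(D) is the number of arcs of D. -/
open Finset

/-- The number of arcs from `A` to `B` in the oriented graph with arc relation `Adj`. -/
def arcsFrom {V : Type*} (Adj : V → V → Prop) [DecidableRel Adj] (A B : Finset V) : ℕ :=
  ((A ×ˢ B).filter fun p => Adj p.1 p.2).card

/-- The total number of arcs. -/
def numArcs {V : Type*} [Fintype V] (Adj : V → V → Prop) [DecidableRel Adj] : ℕ :=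
  arcsFrom Adj Finset.univ Finset.univ

/-- `ow(D) = max { e(A,B) : A,B ⊆ V, e(B,A) = 0 }`. -/
def ow {V : Type*} [Fintype V] [DecidableEq V] (Adj : V → V → Prop) [DecidableRel Adj] : ℕ :=
  Finset.univ.sup fun p : Finset V × Finset V =>
    if arcsFrom Adj p.2 p.1 = 0 then arcsFrom Adj p.1 p.2 else 0
/-!
Pick a random set `A` of vertices, each independently with probability `p`, and let `B` be the
set of vertices with no arc into `A`; then `e(B, A) = 0`, so `e(A, B) ≤ ow(D)`. An arc `x → y`
is counted in `e(A, B)` iff `x ∈ A` and no out-neighbour of `y` lies in `A`. Out-degrees are at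
most `ow(D)` (take `A = {y}`, `B = N⁺(y)`) and `x ∉ N⁺(y)`, so this has probability at least
`p (1 - p) ^ ow(D)`. Hence `e(D) p (1 - p) ^ ow(D) ≤ ow(D)`, and `p = 1 / (2 ow(D))` together with
Bernoulli's inequality gives `e(D) ≤ 4 ow(D)²`.
-/

section BinomialWeight

variable {α : Type*} [DecidableEq α]

-- The probability that a `p`-random subset of `s` equals `A`.
def binomialWeight (p : ℝ) (s A : Finset α) : ℝ := p ^ #A * (1 - p) ^ #(s \ A)

lemma sum_binomialWeight_filter_subset_disjoint (p : ℝ) {s S T : Finset α}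
    (hS : S ⊆ s) (hT : T ⊆ s) (hST : Disjoint S T) :
    ∑ A ∈ s.powerset with S ⊆ A ∧ Disjoint A T, binomialWeight p s A =
      p ^ #S * (1 - p) ^ #T := by
  -- Expanding `∏ v ∈ s, (f v + g v)` by `prod_add` yields the weight of `A` exactly when `A`
  -- contains `S` and avoids `T`.
  set f : α → ℝ := fun v => if v ∉ T then p else 0
  set g : α → ℝ := fun v => if v ∉ S then 1 - p else 0
  have hterm : ∀ A : Finset α, (∏ v ∈ A, f v) * ∏ v ∈ s \ A, g v =
      if S ⊆ A ∧ Disjoint A T then binomialWeight p s A else 0 := by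
    intro A
    have hSA : Disjoint (s \ A) S ↔ S ⊆ A := by
      rw [disjoint_comm, disjoint_left]
      simp only [mem_sdiff, not_and, not_not]
      exact ⟨fun h v hv => h hv (hS hv), fun h v hv _ => h hv⟩
    simp only [f, g, prod_ite_zero, prod_const, ← disjoint_left, ite_zero_mul_ite_zero,
      binomialWeight]
    simp only [hSA, and_comm]
  have hfactor : ∀ v, f v + g v = if v ∈ S then p else if v ∈ T then 1 - p else 1 := by
    intro v
    by_cases hvS : v ∈ S
    · simp [f, g, hvS, disjoint_left.mp hST hvS]
    · by_cases hvT : v ∈ T <;> simp [f, g, hvS, hvT]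
  calc ∑ A ∈ s.powerset with S ⊆ A ∧ Disjoint A T, binomialWeight p s A
      = ∏ v ∈ s, (f v + g v) := by
        rw [sum_filter, prod_add]
        exact (sum_congr rfl fun A _ => hterm A).symm
    _ = ∏ v ∈ S ∪ T, (if v ∈ S then p else if v ∈ T then 1 - p else 1) := by
      rw [prod_congr rfl fun v _ => hfactor v]
      refine (prod_subset (union_subset hS hT) fun v _ hv => ?_).symm
      simp only [mem_union, not_or] at hv
      simp [hv.1, hv.2]
    _ = p ^ #S * (1 - p) ^ #T := by
      rw [prod_union hST]
      congr 1
      · exact (prod_congr rfl fun v hv => if_pos hv).trans (prod_const p)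
      · refine (prod_congr rfl fun v hv => ?_).trans (prod_const (1 - p))
        rw [if_neg (disjoint_right.mp hST hv), if_pos hv]

lemma sum_binomialWeight (p : ℝ) (s : Finset α) :
    ∑ A ∈ s.powerset, binomialWeight p s A = 1 := by
  simpa using sum_binomialWeight_filter_subset_disjoint p (empty_subset s) (empty_subset s)
    (disjoint_empty_left ∅)

lemma binomialWeight_nonneg {p : ℝ} (hp0 : 0 ≤ p) (hp1 : p ≤ 1) (s A : Finset α) :
    0 ≤ binomialWeight p s A :=
  mul_nonneg (pow_nonneg hp0 _) (pow_nonneg (sub_nonneg.mpr hp1) _)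

end BinomialWeight

section OrientedGraph

variable {V : Type*} [Fintype V] (Adj : V → V → Prop) [DecidableRel Adj]

def arcs : Finset (V × V) := {e | Adj e.1 e.2}

def outNbrs (y : V) : Finset V := {z | Adj y z}

def noArcsInto (A : Finset V) : Finset V := {y | ∀ a ∈ A, ¬ Adj y a}

lemma numArcs_eq_card_arcs : numArcs Adj = #(arcs Adj) := by
  simp [numArcs, arcsFrom, arcs]

lemma natCast_arcsFrom_eq_sum [DecidableEq V] (A B : Finset V) :
    (arcsFrom Adj A B : ℝ) = ∑ e ∈ arcs Adj, if e.1 ∈ A ∧ e.2 ∈ B then 1 else 0 := by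
  have : (A ×ˢ B).filter (fun e => Adj e.1 e.2) = {e ∈ arcs Adj | e.1 ∈ A ∧ e.2 ∈ B} := by
    ext e
    simp [arcs, and_comm]
  rw [arcsFrom, this, natCast_card_filter]

lemma arcsFrom_le_ow [DecidableEq V] {A B : Finset V} (h : arcsFrom Adj B A = 0) :
    arcsFrom Adj A B ≤ ow Adj := by
  have := le_sup (f := fun p : Finset V × Finset V =>
    if arcsFrom Adj p.2 p.1 = 0 then arcsFrom Adj p.1 p.2 else 0) (mem_univ (A, B))
  rwa [if_pos h] at this

lemma arcsFrom_noArcsInto_eq_zero (A : Finset V) : arcsFrom Adj (noArcsInto Adj A) A = 0 := by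
  simp only [arcsFrom, card_eq_zero, filter_eq_empty_iff, mem_product, noArcsInto, mem_filter,
    mem_univ, true_and]
  exact fun e he => he.1 e.2 he.2

lemma card_outNbrs_le_ow [DecidableEq V] (hasym : ∀ x y : V, Adj x y → ¬ Adj y x) (y : V) :
    #(outNbrs Adj y) ≤ ow Adj := by
  have hout : arcsFrom Adj {y} (outNbrs Adj y) = #(outNbrs Adj y) := by
    rw [arcsFrom, singleton_product, filter_map, card_map]
    congr 1
    ext z
    simp [outNbrs]
  have hin : arcsFrom Adj (outNbrs Adj y) {y} = 0 := by
    simp only [arcsFrom, card_eq_zero, filter_eq_empty_iff, mem_product, outNbrs, mem_filter,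
      mem_univ, true_and, mem_singleton]
    rintro ⟨z, _⟩ ⟨hyz, rfl⟩
    exact hasym _ _ hyz
  exact hout ▸ arcsFrom_le_ow Adj hin

variable [DecidableEq V]

lemma sum_binomialWeight_filter_mem_noArcsInto (hasym : ∀ x y : V, Adj x y → ¬ Adj y x)
    (p : ℝ) {x y : V} (hxy : Adj x y) :
    ∑ A ∈ univ.powerset with x ∈ A ∧ y ∈ noArcsInto Adj A, binomialWeight p univ A =
      p * (1 - p) ^ #(outNbrs Adj y) := by
  have hiff : ∀ A : Finset V,
      x ∈ A ∧ y ∈ noArcsInto Adj A ↔ {x} ⊆ A ∧ Disjoint A (outNbrs Adj y) := by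
    intro A
    simp [noArcsInto, outNbrs, disjoint_left]
  have hdisj : Disjoint {x} (outNbrs Adj y) := by
    simpa [outNbrs] using hasym x y hxy
  simp_rw [hiff]
  rw [sum_binomialWeight_filter_subset_disjoint p (subset_univ _) (subset_univ _) hdisj,
    card_singleton, pow_one]

lemma numArcs_mul_le_ow (hasym : ∀ x y : V, Adj x y → ¬ Adj y x) {p : ℝ} (hp0 : 0 ≤ p)
    (hp1 : p ≤ 1) :
    (numArcs Adj : ℝ) * (p * (1 - p) ^ ow Adj) ≤ ow Adj := by
  calc (numArcs Adj : ℝ) * (p * (1 - p) ^ ow Adj)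
      = ∑ e ∈ arcs Adj, p * (1 - p) ^ ow Adj := by
        rw [numArcs_eq_card_arcs, sum_const, nsmul_eq_mul]
    _ ≤ ∑ e ∈ arcs Adj, p * (1 - p) ^ #(outNbrs Adj e.2) := by
        refine sum_le_sum fun e _ => mul_le_mul_of_nonneg_left ?_ hp0
        exact pow_le_pow_of_le_one (by linarith) (by linarith) (card_outNbrs_le_ow Adj hasym e.2)
    _ = ∑ e ∈ arcs Adj, ∑ A ∈ univ.powerset with e.1 ∈ A ∧ e.2 ∈ noArcsInto Adj A,
          binomialWeight p univ A :=
        sum_congr rfl fun e he =>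
          (sum_binomialWeight_filter_mem_noArcsInto Adj hasym p (mem_filter.mp he).2).symm
    _ = ∑ A ∈ univ.powerset, binomialWeight p univ A * arcsFrom Adj A (noArcsInto Adj A) := by
        simp_rw [natCast_arcsFrom_eq_sum, mul_sum, mul_ite, mul_one, mul_zero, sum_filter]
        exact sum_comm
    _ ≤ ∑ A ∈ univ.powerset, binomialWeight p univ A * ow Adj := by
        refine sum_le_sum fun A _ =>
          mul_le_mul_of_nonneg_left ?_ (binomialWeight_nonneg hp0 hp1 _ _)
        exact_mod_cast arcsFrom_le_ow Adj (arcsFrom_noArcsInto_eq_zero Adj A)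
    _ = ow Adj := by rw [← sum_mul, sum_binomialWeight, one_mul]

lemma numArcs_le_four_mul_ow_sq (hasym : ∀ x y : V, Adj x y → ¬ Adj y x) :
    (numArcs Adj : ℝ) ≤ 4 * (ow Adj : ℝ) ^ 2 := by
  rcases Nat.eq_zero_or_pos (ow Adj) with hw | hw
  · simpa [hw] using numArcs_mul_le_ow Adj hasym zero_le_one le_rfl
  set w : ℝ := (ow Adj : ℝ)
  have hw : 1 ≤ w := Nat.one_le_cast.mpr hw
  set p : ℝ := 1 / (2 * w)
  have hp0 : 0 ≤ p := by positivity
  have hp1 : p ≤ 1 := by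
    rw [div_le_one (by positivity)]
    linarith
  have hwp : w * p = 1 / 2 := by
    simp only [p]
    field_simp
  have hbern : 1 / 2 ≤ (1 - p) ^ ow Adj := by
    have h := one_add_mul_sub_le_pow (a := 1 - p) (by linarith) (ow Adj)
    linarith
  have hquarter : (numArcs Adj : ℝ) / (4 * w) ≤ w :=
    calc (numArcs Adj : ℝ) / (4 * w) = (numArcs Adj : ℝ) * (p * (1 / 2)) := by ring
      _ ≤ (numArcs Adj : ℝ) * (p * (1 - p) ^ ow Adj) := by gcongr
      _ ≤ w := numArcs_mul_le_ow Adj hasym hp0 hp1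
  rw [div_le_iff₀ (by positivity)] at hquarter
  linarith

end OrientedGraph

/-- Every oriented graph `D` satisfies `ow(D) ≥ √(e(D)) / 2`. -/
theorem stmt10 {V : Type*} [Fintype V] [DecidableEq V]
    (Adj : V → V → Prop) [DecidableRel Adj]
    (hasym : ∀ x y : V, Adj x y → ¬ Adj y x) :
    (ow Adj : ℝ) ≥ Real.sqrt (numArcs Adj : ℝ) / 2 := by
  have h := Real.sqrt_le_sqrt (numArcs_le_four_mul_ow_sq Adj hasym)
  rw [show (4 : ℝ) * (ow Adj : ℝ) ^ 2 = (2 * ow Adj) ^ 2 by ring,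
    Real.sqrt_sq (by positivity)] at h
  linarith
end

section
/- Let D be an oriented graph on n vertices with bias(D) ≤ e(D)/8. Then D contains at least e(D)^2/(8n) directed paths of length two x→y, y→u whose end vertex u has out-degree at least e(D)/(8n). -/
open Finset

open scoped Classical

/-- `bias(D) = max { e(A,B) : A,B ⊆ V, e(B,A) ≤ e(A,B)/2 }`. -/
def bias {V : Type*} [Fintype V] [DecidableEq V] (Adj : V → V → Prop) [DecidableRel Adj] : ℕ :=
  Finset.univ.sup fun p : Finset V × Finset V =>
    if 2 * arcsFrom Adj p.2 p.1 ≤ arcsFrom Adj p.1 p.2 then arcsFrom Adj p.1 p.2 else 0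

/-- The out-degree of a vertex. -/
def outDeg {V : Type*} [Fintype V] (Adj : V → V → Prop) [DecidableRel Adj] (v : V) : ℕ :=
  (Finset.univ.filter fun w : V => Adj v w).card

/-- The number of directed paths of length two `x→y, y→u` whose end vertex `u` has
out-degree at least `b`. -/
noncomputable def pathsTwoEndDeg {V : Type*} [Fintype V]
    (Adj : V → V → Prop) [DecidableRel Adj] (b : ℝ) : ℕ :=
  (Finset.univ.filter fun t : V × V × V =>
      Adj t.1 t.2.1 ∧ Adj t.2.1 t.2.2 ∧ b ≤ (outDeg Adj t.2.2 : ℝ)).card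

/-!
Write `e = e(D)`, `b = e/(8n)` and let `T` be the set of vertices of out-degree at least `b`.
Fewer than `n b = e/8` arcs leave `Tᶜ`, so the bias condition lets at most `e/4` arcs enter `Tᶜ`,
and at least `3e/4` arcs end in `T`. For a vertex `y` let `d y` be its in-degree and `g y` the
number of its out-neighbours in `T`; the paths counted are `∑ d y * g y`. The vertices with
`2 d y < g y` send into `T` at least twice the arcs they receive from it, so by the bias condition
they send at most `e/8` arcs into `T`. The other vertices send at least `5e/8` arcs into `T` and
satisfy `g y ^ 2 ≤ 2 d y g y`, so Cauchy–Schwarz gives `(5e/8)^2 ≤ 2n ∑ d y * g y`.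
-/

lemma sq_sum_filter_le_two_mul_card_mul_sum_mul {ι : Type*} (s : Finset ι) (d g : ι → ℕ) :
    (∑ i ∈ s with g i ≤ 2 * d i, g i) ^ 2 ≤ 2 * #s * ∑ i ∈ s, d i * g i :=
  calc (∑ i ∈ s with g i ≤ 2 * d i, g i) ^ 2
      ≤ #{i ∈ s | g i ≤ 2 * d i} * ∑ i ∈ s with g i ≤ 2 * d i, g i ^ 2 :=
        sq_sum_le_card_mul_sum_sq
    _ ≤ #s * ∑ i ∈ s with g i ≤ 2 * d i, 2 * (d i * g i) := by
        gcongr with i hi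
        · exact filter_subset _ _
        · rw [sq, ← mul_assoc]
          exact Nat.mul_le_mul_right _ (mem_filter.1 hi).2
    _ ≤ #s * ∑ i ∈ s, 2 * (d i * g i) := by
        gcongr
        exact filter_subset _ _
    _ = 2 * #s * ∑ i ∈ s, d i * g i := by
        rw [← mul_sum]
        ring

section ArcCounting

variable {V : Type*} (Adj : V → V → Prop) [DecidableRel Adj]

lemma arcsFrom_eq_sum_left (A B : Finset V) :
    arcsFrom Adj A B = ∑ x ∈ A, #{y ∈ B | Adj x y} := by
  simp only [arcsFrom, card_filter, sum_product]

lemma arcsFrom_eq_sum_right (A B : Finset V) :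
    arcsFrom Adj A B = ∑ y ∈ B, #{x ∈ A | Adj x y} := by
  simp only [arcsFrom, card_filter, sum_product_right]

lemma arcsFrom_mono_left {A A' : Finset V} (h : A ⊆ A') (B : Finset V) :
    arcsFrom Adj A B ≤ arcsFrom Adj A' B :=
  card_le_card (filter_subset_filter _ (product_subset_product_left h))

variable [Fintype V]

def inDeg (y : V) : ℕ := #{x | Adj x y}

def outDegInto (T : Finset V) (y : V) : ℕ := #{u ∈ T | Adj y u}

noncomputable def highOutDeg (b : ℝ) : Finset V := {u | b ≤ outDeg Adj u}

lemma pathsTwoEndDeg_eq_sum (b : ℝ) :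
    pathsTwoEndDeg Adj b = ∑ y, inDeg Adj y * outDegInto Adj (highOutDeg Adj b) y := by
  simp only [pathsTwoEndDeg, inDeg, outDegInto, highOutDeg, card_filter, Fintype.sum_prod_type,
    sum_mul_sum, sum_filter]
  rw [sum_comm]
  refine sum_congr rfl fun y _ => sum_congr rfl fun x _ => sum_congr rfl fun u _ => ?_
  by_cases hxy : Adj x y <;> by_cases hyu : Adj y u <;> simp [hxy, hyu, and_comm]

lemma arcsFrom_univ_eq_arcsFrom_add_sum_filter (T : Finset V) :
    arcsFrom Adj univ T = arcsFrom Adj {y | 2 * inDeg Adj y < outDegInto Adj T y} T +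
      ∑ y with outDegInto Adj T y ≤ 2 * inDeg Adj y, outDegInto Adj T y := by
  simp only [arcsFrom_eq_sum_left, ← not_lt]
  exact (sum_filter_add_sum_filter_not _ _ _).symm

variable [DecidableEq V]

lemma numArcs_eq_arcsFrom_add_arcsFrom_compl (S : Finset V) :
    numArcs Adj = arcsFrom Adj univ S + arcsFrom Adj univ Sᶜ := by
  simp only [numArcs, arcsFrom_eq_sum_right, sum_add_sum_compl]

lemma arcsFrom_compl_highOutDeg_le {b : ℝ} (hb : 0 ≤ b) :
    (arcsFrom Adj (highOutDeg Adj b)ᶜ univ : ℝ) ≤ Fintype.card V * b := by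
  rw [arcsFrom_eq_sum_left]
  push_cast
  calc ∑ x ∈ (highOutDeg Adj b)ᶜ, (#{y ∈ univ | Adj x y} : ℝ)
      ≤ ∑ _x ∈ (highOutDeg Adj b)ᶜ, b :=
        sum_le_sum fun x hx => by
          simp only [highOutDeg, mem_compl, mem_filter_univ, not_le] at hx
          exact hx.le
    _ ≤ Fintype.card V * b := by
        rw [sum_const, nsmul_eq_mul]
        gcongr
        exact card_le_univ _

lemma arcsFrom_le_bias {P Q : Finset V} (h : 2 * arcsFrom Adj Q P ≤ arcsFrom Adj P Q) :
    arcsFrom Adj P Q ≤ bias Adj :=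
  le_sup_of_le (mem_univ (P, Q)) (by simp only [h, if_true, le_refl])

lemma arcsFrom_le_max_bias (P Q : Finset V) :
    arcsFrom Adj P Q ≤ max (bias Adj) (2 * arcsFrom Adj Q P) := by
  rcases le_total (2 * arcsFrom Adj Q P) (arcsFrom Adj P Q) with h | h
  · exact le_max_of_le_left (arcsFrom_le_bias Adj h)
  · exact le_max_of_le_right h

lemma arcsFrom_filter_two_mul_inDeg_lt_le_bias (T : Finset V) :
    arcsFrom Adj {y | 2 * inDeg Adj y < outDegInto Adj T y} T ≤ bias Adj := by
  set A : Finset V := {y | 2 * inDeg Adj y < outDegInto Adj T y}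
  apply arcsFrom_le_bias
  calc 2 * arcsFrom Adj T A ≤ 2 * arcsFrom Adj univ A := by
        gcongr
        exact arcsFrom_mono_left Adj (subset_univ T) A
    _ = ∑ y ∈ A, 2 * inDeg Adj y := by rw [arcsFrom_eq_sum_right, mul_sum]; rfl
    _ ≤ ∑ y ∈ A, outDegInto Adj T y := sum_le_sum fun y hy => (mem_filter.1 hy).2.le
    _ = arcsFrom Adj A T := (arcsFrom_eq_sum_left Adj A T).symm

lemma five_mul_numArcs_div_eight_le {b : ℝ} (hb₀ : 0 ≤ b)
    (hb : Fintype.card V * b ≤ numArcs Adj / 8) (hbias : (bias Adj : ℝ) ≤ numArcs Adj / 8) :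
    5 * (numArcs Adj : ℝ) / 8 ≤
      ((∑ y with outDegInto Adj (highOutDeg Adj b) y ≤ 2 * inDeg Adj y,
        outDegInto Adj (highOutDeg Adj b) y : ℕ) : ℝ) := by
  set T := highOutDeg Adj b
  have hout : (arcsFrom Adj Tᶜ univ : ℝ) ≤ numArcs Adj / 8 :=
    (arcsFrom_compl_highOutDeg_le Adj hb₀).trans hb
  have hin : (arcsFrom Adj univ Tᶜ : ℝ) ≤ numArcs Adj / 4 := by
    have : (arcsFrom Adj univ Tᶜ : ℝ) ≤ max (bias Adj : ℝ) (2 * arcsFrom Adj Tᶜ univ) := by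
      exact_mod_cast arcsFrom_le_max_bias Adj univ Tᶜ
    exact this.trans (max_le (by linarith) (by linarith))
  have hheavy : (arcsFrom Adj {y | 2 * inDeg Adj y < outDegInto Adj T y} T : ℝ) ≤
      numArcs Adj / 8 :=
    le_trans (by exact_mod_cast arcsFrom_filter_two_mul_inDeg_lt_le_bias Adj T) hbias
  have hsplit := numArcs_eq_arcsFrom_add_arcsFrom_compl Adj Tᶜ
  rw [compl_compl, arcsFrom_univ_eq_arcsFrom_add_sum_filter Adj T] at hsplit
  have hsplit' := congrArg (Nat.cast (R := ℝ)) hsplit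
  push_cast at hsplit' ⊢
  linarith

end ArcCounting

theorem stmt13_general {V : Type*} [Fintype V] [DecidableEq V]
    (Adj : V → V → Prop) [DecidableRel Adj]
    (hbias : (bias Adj : ℝ) ≤ (numArcs Adj : ℝ) / 8) :
    (pathsTwoEndDeg Adj ((numArcs Adj : ℝ) / (8 * (Fintype.card V : ℝ))) : ℝ) ≥
      (numArcs Adj : ℝ) ^ 2 / (8 * (Fintype.card V : ℝ)) := by
  obtain hn | hn := (Fintype.card V).eq_zero_or_pos
  · simp [hn]
  set b : ℝ := (numArcs Adj : ℝ) / (8 * (Fintype.card V : ℝ))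
  have hb : Fintype.card V * b = numArcs Adj / 8 := by
    simp only [b]
    field_simp
  have hfive := five_mul_numArcs_div_eight_le Adj (by positivity) hb.le hbias
  have hcs := sq_sum_filter_le_two_mul_card_mul_sum_mul univ (inDeg Adj)
    (outDegInto Adj (highOutDeg Adj b))
  rw [card_univ, ← pathsTwoEndDeg_eq_sum] at hcs
  replace hcs := (Nat.cast_le (α := ℝ)).mpr hcs
  push_cast at hcs hfive
  rw [ge_iff_le, div_le_iff₀ (by positivity)]
  nlinarith

/-- Every oriented graph `D` on `n` vertices with `bias(D) ≤ e(D)/8` contains at least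
`e(D)^2/(8n)` directed paths of length two whose end vertex has out-degree at least
`e(D)/(8n)`. -/
theorem stmt13 {V : Type*} [Fintype V] [DecidableEq V]
    (Adj : V → V → Prop) [DecidableRel Adj]
    (hasym : ∀ x y : V, Adj x y → ¬ Adj y x)
    (hbias : (bias Adj : ℝ) ≤ (numArcs Adj : ℝ) / 8) :
    (pathsTwoEndDeg Adj ((numArcs Adj : ℝ) / (8 * (Fintype.card V : ℝ))) : ℝ) ≥
      (numArcs Adj : ℝ) ^ 2 / (8 * (Fintype.card V : ℝ)) :=
  stmt13_general Adj hbias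
end

section
/- Let h ∈ ℕ and let H be an oriented graph on h vertices. Then for every ν ∈ (0,1) there exist real numbers ε > 0 and β with 0 < β < 1/2, and an integer N, such that every oriented graph D on n ≥ N vertices with at least β·n^2 arcs and with bias_ν(D) ≤ ε·e(D) contains H as a subgraph, i.e., there is an injective map φ : V(H) → V(D) such that φ(x)→φ(y) is an arc of D for every arc x→y of H. -/
open Finset

open scoped Classical

/-- `bias_γ(D) = max { e(A,B) : A,B ⊆ V, e(B,A) ≤ γ e(A,B) }`. -/
noncomputable def biasGamma {V : Type*} [Fintype V] [DecidableEq V]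
    (Adj : V → V → Prop) [DecidableRel Adj] (γ : ℝ) : ℕ :=
  Finset.univ.sup fun p : Finset V × Finset V =>
    if (arcsFrom Adj p.2 p.1 : ℝ) ≤ γ * (arcsFrom Adj p.1 p.2 : ℝ) then
      arcsFrom Adj p.1 p.2 else 0

/-!
All but `μ² n² / 2` ordered pairs of vertices of `D` are joined by an arc in one direction or the
other, so between any two vertex sets `A`, `B` of size at least `μ n` there are at least `|A||B|/2`
arcs in total. If few of them pointed from `A` to `B`, the arcs from `B` to `A` would witness a
`ν`-bias larger than `ε e(D)`; hence `e(A, B) ≥ (ν/4) |A||B|` for all such pairs, in both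
directions. With this density `H` is embedded greedily: split `V(D)` into `h` disjoint classes and
place the vertices of `H` one at a time, each at a vertex of its class having many out- and
in-neighbours in every class not yet used, and shrink each such class to the neighbourhood
prescribed by `H`, losing a factor `ν/8` per step.
-/

section

variable {V : Type*} (Adj : V → V → Prop) [DecidableRel Adj]

lemma arcsFrom_eq_sum_card_filter (A B : Finset V) :
    arcsFrom Adj A B = ∑ a ∈ A, #{b ∈ B | Adj a b} := by
  simp only [arcsFrom, card_filter, sum_product]

lemma arcsFrom_swap (A B : Finset V) :
    arcsFrom (fun x y => Adj y x) A B = arcsFrom Adj B A := by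
  simp only [arcsFrom, card_filter, sum_product]
  exact sum_comm

lemma card_mul_card_eq_arcsFrom_add_arcsFrom_add (hor : ∀ x y, Adj x y → ¬ Adj y x)
    (A B : Finset V) :
    #A * #B = arcsFrom Adj A B + arcsFrom Adj B A +
      #{p ∈ A ×ˢ B | ¬ Adj p.1 p.2 ∧ ¬ Adj p.2 p.1} := by
  rw [← arcsFrom_swap Adj A B, ← card_product, card_eq_sum_ones (A ×ˢ B)]
  simp only [arcsFrom, card_filter, ← sum_add_distrib]
  refine sum_congr rfl fun p _ => ?_
  by_cases h₁ : Adj p.1 p.2 <;> by_cases h₂ : Adj p.2 p.1 <;> simp [h₁, h₂]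
  exact hor _ _ h₁ h₂

lemma card_mul_card_add_two_mul_numArcs_le [Fintype V] (hor : ∀ x y, Adj x y → ¬ Adj y x)
    (A B : Finset V) :
    #A * #B + 2 * numArcs Adj ≤ arcsFrom Adj A B + arcsFrom Adj B A + Fintype.card V ^ 2 := by
  have hAB := card_mul_card_eq_arcsFrom_add_arcsFrom_add Adj hor A B
  have huniv := card_mul_card_eq_arcsFrom_add_arcsFrom_add Adj hor univ univ
  have hmono : #{p ∈ A ×ˢ B | ¬ Adj p.1 p.2 ∧ ¬ Adj p.2 p.1} ≤
      #{p ∈ univ ×ˢ univ | ¬ Adj p.1 p.2 ∧ ¬ Adj p.2 p.1} :=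
    card_le_card (filter_subset_filter _ (product_subset_product (subset_univ _) (subset_univ _)))
  rw [card_univ, ← sq] at huniv
  unfold numArcs
  omega

lemma arcsFrom_le_biasGamma [Fintype V] [DecidableEq V] {γ : ℝ} {A B : Finset V}
    (h : (arcsFrom Adj B A : ℝ) ≤ γ * arcsFrom Adj A B) :
    arcsFrom Adj A B ≤ biasGamma Adj γ := by
  have := le_sup (f := fun p : Finset V × Finset V =>
    if (arcsFrom Adj p.2 p.1 : ℝ) ≤ γ * (arcsFrom Adj p.1 p.2 : ℝ) then
      arcsFrom Adj p.1 p.2 else 0) (mem_univ (A, B))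
  simpa [biasGamma, h] using this

lemma le_arcsFrom_of_biasGamma_le [Fintype V] [DecidableEq V] {ν : ℝ} (hν0 : 0 ≤ ν)
    (hν1 : ν ≤ 1) {A B : Finset V}
    (hcover : (#A * #B : ℝ) ≤ 2 * (arcsFrom Adj A B + arcsFrom Adj B A))
    (hbias : (biasGamma Adj ν : ℝ) ≤ #A * #B / 4) :
    ν / 4 * #A * #B ≤ arcsFrom Adj A B := by
  have hp : (0 : ℝ) ≤ #A * #B := by positivity
  have hx : (0 : ℝ) ≤ arcsFrom Adj A B := Nat.cast_nonneg _
  rcases le_or_gt (arcsFrom Adj A B : ℝ) (ν * arcsFrom Adj B A) with hle | hlt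
  · have : (arcsFrom Adj B A : ℝ) ≤ biasGamma Adj ν := by
      exact_mod_cast arcsFrom_le_biasGamma Adj hle
    nlinarith
  · nlinarith

def IsArcDense (c m : ℝ) : Prop :=
  ∀ A B : Finset V, Disjoint A B → m ≤ #A → m ≤ #B → c * #A * #B ≤ arcsFrom Adj A B

lemma isArcDense_of_biasGamma_le [Fintype V] [DecidableEq V] (hor : ∀ x y, Adj x y → ¬ Adj y x)
    {ν μ : ℝ} (hν0 : 0 ≤ ν) (hν1 : ν ≤ 1) (hμ : 0 ≤ μ)
    (hdense : (1 / 2 - μ ^ 2 / 4) * (Fintype.card V : ℝ) ^ 2 ≤ numArcs Adj)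
    (hbias : (biasGamma Adj ν : ℝ) ≤ μ ^ 2 / 4 * numArcs Adj) :
    IsArcDense Adj (ν / 4) (μ * Fintype.card V) := by
  intro A B _ hA hB
  have hp : (μ * Fintype.card V) ^ 2 ≤ #A * #B := by
    rw [sq]; exact mul_le_mul hA hB (by positivity) (by positivity)
  have hcount : (#A * #B + 2 * numArcs Adj : ℝ) ≤
      arcsFrom Adj A B + arcsFrom Adj B A + Fintype.card V ^ 2 := by
    exact_mod_cast card_mul_card_add_two_mul_numArcs_le Adj hor A B
  have hmax : (2 * numArcs Adj : ℝ) ≤ Fintype.card V ^ 2 := by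
    exact_mod_cast by simpa [arcsFrom] using card_mul_card_add_two_mul_numArcs_le Adj hor ∅ ∅
  apply le_arcsFrom_of_biasGamma_le Adj hν0 hν1 <;> nlinarith

variable {Adj}

lemma IsArcDense.swap {c m : ℝ} (hD : IsArcDense Adj c m) :
    IsArcDense (fun x y => Adj y x) c m := fun A B hAB hA hB => by
  rw [arcsFrom_swap]
  calc c * #A * #B = c * #B * #A := by ring
    _ ≤ _ := hD B A hAB.symm hB hA

lemma IsArcDense.card_lowDegree_lt {c m : ℝ} (hD : IsArcDense Adj c m) (hc : 0 < c)
    (hm : 0 < m) {A B : Finset V} (hAB : Disjoint A B) (hB : m ≤ #B) :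
    (#{a ∈ A | (#{b ∈ B | Adj a b} : ℝ) < c / 2 * #B} : ℝ) < m := by
  set L := {a ∈ A | (#{b ∈ B | Adj a b} : ℝ) < c / 2 * #B}
  by_contra! hL
  have hlower := hD L B (hAB.mono_left (filter_subset _ _)) hL hB
  have hupper : (arcsFrom Adj L B : ℝ) ≤ c / 2 * #L * #B := by
    rw [arcsFrom_eq_sum_card_filter]
    push_cast
    calc ∑ a ∈ L, (#{b ∈ B | Adj a b} : ℝ) ≤ ∑ _a ∈ L, c / 2 * #B :=
          sum_le_sum fun a ha => (mem_filter.1 ha).2.le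
      _ = c / 2 * #L * #B := by rw [sum_const, nsmul_eq_mul]; ring
  have : 0 < (#L : ℝ) * #B := mul_pos (by linarith) (by linarith)
  nlinarith

lemma exists_pairwiseDisjoint_card_eq {α : Type*} [Fintype α] [Fintype V] {s : ℕ}
    (hs : Fintype.card α * s ≤ Fintype.card V) :
    ∃ C : α → Finset V, (Set.univ : Set α).PairwiseDisjoint C ∧ ∀ j, #(C j) = s := by
  obtain ⟨f⟩ : Nonempty (α × Fin s ↪ V) :=
    Function.Embedding.nonempty_of_card_le (by simpa using hs)
  refine ⟨fun j => univ.map ((Function.Embedding.sectR j (Fin s)).trans f), ?_, fun j => by simp⟩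
  intro j _ j' _ hjj'
  simp only [Function.onFun, disjoint_left, mem_map, mem_univ, true_and]
  rintro _ ⟨k, rfl⟩ ⟨k', hk'⟩
  exact hjj' (congr_arg Prod.fst (f.injective hk')).symm

section Embedding

variable {α : Type*} {c m : ℝ}

lemma IsArcDense.exists_high_degree_vertex (hD : IsArcDense Adj c m) (hc : 0 < c) (hm : 0 < m)
    {S : Finset α} {C : α → Finset V} {a : α} (hdisj : ∀ j ∈ S, Disjoint (C a) (C j))
    (hbig : ∀ j ∈ S, m ≤ #(C j)) (hCa : 2 * #S * m < #(C a)) :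
    ∃ v ∈ C a, ∀ j ∈ S, c / 2 * #(C j) ≤ #{w ∈ C j | Adj v w} ∧
      c / 2 * #(C j) ≤ #{w ∈ C j | Adj w v} := by
  set lowOut := fun j => {v ∈ C a | (#{w ∈ C j | Adj v w} : ℝ) < c / 2 * #(C j)}
  set lowIn := fun j => {v ∈ C a | (#{w ∈ C j | Adj w v} : ℝ) < c / 2 * #(C j)}
  set bad := S.biUnion fun j => lowOut j ∪ lowIn j
  have hbad : (#bad : ℝ) < #(C a) := by
    calc (#bad : ℝ) ≤ ∑ j ∈ S, ((#(lowOut j) : ℝ) + #(lowIn j)) := by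
          exact_mod_cast card_biUnion_le.trans (sum_le_sum fun j _ => card_union_le _ _)
      _ ≤ ∑ _j ∈ S, 2 * m := sum_le_sum fun j hj => by
          have hout := hD.card_lowDegree_lt hc hm (hdisj j hj) (hbig j hj)
          have hin := hD.swap.card_lowDegree_lt hc hm (hdisj j hj) (hbig j hj)
          linarith
      _ < #(C a) := by rw [sum_const, nsmul_eq_mul]; linarith
  obtain ⟨v, hv⟩ : (C a \ bad).Nonempty :=
    sdiff_nonempty.2 fun hsub => hbad.not_ge (by exact_mod_cast card_le_card hsub)
  obtain ⟨hva, hvbad⟩ := mem_sdiff.1 hv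
  refine ⟨v, hva, fun j hj => ?_⟩
  simp only [bad, mem_biUnion, mem_union, not_exists, not_and, not_or] at hvbad
  obtain ⟨hout, hin⟩ := hvbad j hj
  simp only [lowOut, lowIn, mem_filter, hva, true_and, not_lt] at hout hin
  exact ⟨hout, hin⟩

lemma IsArcDense.exists_embedding_on [Nonempty V] {H : α → α → Prop}
    (hH : ∀ x y, H x y → ¬ H y x) (hD : IsArcDense Adj c m) (hc0 : 0 < c) (hc1 : c ≤ 1)
    (hm : 0 < m) (S : Finset α) (C : α → Finset V) (hdisj : (S : Set α).PairwiseDisjoint C)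
    (hsize : ∀ j ∈ S, 2 * #S * m ≤ (c / 2) ^ #S * #(C j)) :
    ∃ φ : α → V, (∀ j ∈ S, φ j ∈ C j) ∧ ∀ x ∈ S, ∀ y ∈ S, H x y → Adj (φ x) (φ y) := by
  induction S using Finset.induction_on generalizing C with
  | empty => exact ⟨fun _ => Classical.arbitrary V, by simp, by simp⟩
  | insert a S ha ih =>
    rw [card_insert_of_notMem ha, Nat.cast_add_one] at hsize
    have hpow : (c / 2) ^ (#S + 1) ≤ 1 := pow_le_one₀ (by positivity) (by linarith)
    have hbig : ∀ j ∈ insert a S, 2 * (#S + 1) * m ≤ #(C j) := fun j hj => by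
      nlinarith [hsize j hj, (Nat.cast_nonneg _ : (0 : ℝ) ≤ #(C j))]
    have hdisj_a : ∀ j ∈ S, Disjoint (C a) (C j) := fun j hj =>
      hdisj (by simp) (by simp [hj]) (by rintro rfl; exact ha hj)
    obtain ⟨v, hva, hv⟩ := hD.exists_high_degree_vertex hc0 hm hdisj_a
      (fun j hj => by nlinarith [hbig j (mem_insert_of_mem hj)])
      (by nlinarith [hbig a (mem_insert_self a S)])
    set C' := fun j => {w ∈ C j | (H a j → Adj v w) ∧ (H j a → Adj w v)}
    have hC'sub : ∀ j, C' j ⊆ C j := fun j => filter_subset _ _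
    have hC' : ∀ j ∈ S, c / 2 * #(C j) ≤ #(C' j) := fun j hj => by
      by_cases haj : H a j
      · have : C' j = {w ∈ C j | Adj v w} := filter_congr fun w _ => by simp [haj, hH a j haj]
        rw [this]; exact (hv j hj).1
      by_cases hja : H j a
      · have : C' j = {w ∈ C j | Adj w v} := filter_congr fun w _ => by simp [haj, hja]
        rw [this]; exact (hv j hj).2
      · have : C' j = C j := filter_true_of_mem fun w _ => by simp [haj, hja]
        rw [this]
        nlinarith [(Nat.cast_nonneg _ : (0 : ℝ) ≤ #(C j))]
    obtain ⟨φ, hφC, hφH⟩ := ih C'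
      ((hdisj.subset (coe_subset.2 (subset_insert a S))).mono hC'sub)
      fun j hj => calc
        2 * #S * m ≤ 2 * (#S + 1) * m := by linarith
        _ ≤ (c / 2) ^ (#S + 1) * #(C j) := hsize j (mem_insert_of_mem hj)
        _ = (c / 2) ^ #S * (c / 2 * #(C j)) := by ring
        _ ≤ (c / 2) ^ #S * #(C' j) := mul_le_mul_of_nonneg_left (hC' j hj) (by positivity)
    have hne : ∀ j ∈ S, j ≠ a := fun j hj hja => ha (hja ▸ hj)
    refine ⟨Function.update φ a v, fun j hj => ?_, fun x hx y hy hxy => ?_⟩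
    · rcases mem_insert.1 hj with rfl | hj
      · simpa using hva
      · rw [Function.update_of_ne (hne j hj)]
        exact hC'sub j (hφC j hj)
    rcases mem_insert.1 hx with rfl | hxS <;> rcases mem_insert.1 hy with rfl | hyS
    · exact absurd hxy (hH _ _ hxy)
    · rw [Function.update_self, Function.update_of_ne (hne y hyS)]
      exact (mem_filter.1 (hφC y hyS)).2.1 hxy
    · rw [Function.update_self, Function.update_of_ne (hne x hxS)]
      exact (mem_filter.1 (hφC x hxS)).2.2 hxy
    · rw [Function.update_of_ne (hne x hxS), Function.update_of_ne (hne y hyS)]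
      exact hφH x hxS y hyS hxy

lemma IsArcDense.exists_embedding [Fintype V] [Nonempty V] [Fintype α] {H : α → α → Prop}
    (hH : ∀ x y, H x y → ¬ H y x) (hD : IsArcDense Adj c m) (hc0 : 0 < c) (hc1 : c ≤ 1)
    (hm : 0 < m) {s : ℕ} (hs : Fintype.card α * s ≤ Fintype.card V)
    (hsm : 2 * Fintype.card α * m ≤ (c / 2) ^ Fintype.card α * s) :
    ∃ φ : α → V, Function.Injective φ ∧ ∀ x y, H x y → Adj (φ x) (φ y) := by
  obtain ⟨C, hdisj, hcard⟩ := exists_pairwiseDisjoint_card_eq hs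
  obtain ⟨φ, hφC, hφH⟩ := hD.exists_embedding_on hH hc0 hc1 hm univ C (by simpa using hdisj)
    (fun j _ => by simpa [hcard] using hsm)
  refine ⟨φ, fun x y hxy => ?_, fun x y => hφH x (mem_univ x) y (mem_univ y)⟩
  by_contra hne
  exact disjoint_left.1 (hdisj (Set.mem_univ x) (Set.mem_univ y) hne) (hφC x (mem_univ x))
    (hxy ▸ hφC y (mem_univ y))

end Embedding

end

lemma two_mul_mul_le_pow_mul_div {h n : ℕ} {q : ℝ} (hq : 0 ≤ q) (hn : 2 * (h + 1) ≤ n) :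
    2 * h * (q ^ h / (4 * (h + 1) ^ 2) * n) ≤ q ^ h * (n / (h + 1) : ℕ) := by
  have hdiv : n ≤ 2 * (h + 1) * (n / (h + 1)) := by
    have := Nat.lt_mul_div_succ n h.succ_pos
    nlinarith
  have hdiv' : (n : ℝ) ≤ 2 * (h + 1) * (n / (h + 1) : ℕ) := by exact_mod_cast hdiv
  calc 2 * h * (q ^ h / (4 * (h + 1) ^ 2) * n) = q ^ h * (h * n / (2 * (h + 1) ^ 2)) := by
        field_simp; ring
    _ ≤ q ^ h * (n / (h + 1) : ℕ) := by
        gcongr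
        rw [div_le_iff₀ (by positivity)]
        nlinarith

theorem stmt19_general (h : ℕ) (HAdj : Fin h → Fin h → Prop)
    (hH : ∀ x y : Fin h, HAdj x y → ¬ HAdj y x)
    (ν : ℝ) (hν0 : 0 < ν) (hν1 : ν < 1) :
    ∃ ε β : ℝ, 0 < ε ∧ 0 < β ∧ β < 1 / 2 ∧ ∃ N : ℕ,
      ∀ (V : Type) [Fintype V] [DecidableEq V] (Adj : V → V → Prop) [DecidableRel Adj],
        (∀ x y : V, Adj x y → ¬ Adj y x) →
        N ≤ Fintype.card V →
        (numArcs Adj : ℝ) ≥ β * (Fintype.card V : ℝ) ^ 2 →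
        (biasGamma Adj ν : ℝ) ≤ ε * (numArcs Adj : ℝ) →
        ∃ φ : Fin h → V, Function.Injective φ ∧
          ∀ x y : Fin h, HAdj x y → Adj (φ x) (φ y) := by
  -- Classes of size `n / (h + 1)`, shrunk `h` times by the factor `ν / 8`, keep more than `2 h μ n`
  -- vertices.
  set μ : ℝ := (ν / 4 / 2) ^ h / (4 * (h + 1) ^ 2)
  have hpow : (ν / 4 / 2) ^ h ≤ 1 := pow_le_one₀ (by positivity) (by linarith)
  have hμ0 : 0 < μ := by positivity
  have hμ1 : μ ≤ 1 := div_le_one_of_le₀ (by nlinarith [h.cast_nonneg (α := ℝ)]) (by positivity)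
  refine ⟨μ ^ 2 / 4, 1 / 2 - μ ^ 2 / 4, by positivity, by nlinarith, by nlinarith, 2 * (h + 1),
    fun V _ _ Adj _ hor hn hdense hbias => ?_⟩
  have : Nonempty V := Fintype.card_pos_iff.1 (by omega)
  have hD := isArcDense_of_biasGamma_le Adj hor hν0.le hν1.le hμ0.le hdense hbias
  refine hD.exists_embedding hH (by positivity) (by linarith) (by positivity)
    (s := Fintype.card V / (h + 1)) ?_ ?_
  · rw [Fintype.card_fin]
    exact (Nat.mul_le_mul_right _ h.le_succ).trans (Nat.mul_div_le _ (h + 1))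
  · rw [Fintype.card_fin]
    exact two_mul_mul_le_pow_mul_div (by positivity) hn

/-- For every oriented graph `H` on `h` vertices and every `ν ∈ (0,1)` there exist
`ε > 0`, `β ∈ (0, 1/2)` and `N` such that every oriented graph `D` on `n ≥ N` vertices
with at least `β n^2` arcs and `bias_ν(D) ≤ ε e(D)` contains `H` as a subgraph. -/
theorem stmt19 (h : ℕ) (HAdj : Fin h → Fin h → Prop) [DecidableRel HAdj]
    (hH : ∀ x y : Fin h, HAdj x y → ¬ HAdj y x)
    (ν : ℝ) (hν0 : 0 < ν) (hν1 : ν < 1) :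
    ∃ ε β : ℝ, 0 < ε ∧ 0 < β ∧ β < 1 / 2 ∧ ∃ N : ℕ,
      ∀ (V : Type) [Fintype V] [DecidableEq V] (Adj : V → V → Prop) [DecidableRel Adj],
        (∀ x y : V, Adj x y → ¬ Adj y x) →
        N ≤ Fintype.card V →
        (numArcs Adj : ℝ) ≥ β * (Fintype.card V : ℝ) ^ 2 →
        (biasGamma Adj ν : ℝ) ≤ ε * (numArcs Adj : ℝ) →
        ∃ φ : Fin h → V, Function.Injective φ ∧
          ∀ x y : Fin h, HAdj x y → Adj (φ x) (φ y) :=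
  stmt19_general h HAdj hH ν hν0 hν1
end
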